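/- arXiv:2003.00057 — 2 statements merged into one kernel-verified Lean document; each statement's English description precedes it below -/
import Mathlib

section
/- Let N ≥ 1 and let n and n_t be unit vectors in ℝ^N with ⟨n_t, n⟩ ≠ 0. Then for an arbitrary vector d ∈ ℝ^N, one has d = 0 if and only if both Π₀(Π_t d) = 0 and ⟨n, d⟩ = 0. -/
open scoped RealInnerProductSpace

/-- Lemma 2.1 (Solonnikov): if `n` and `nt` are unit vectors with `⟪nt, n⟫ ≠ 0`,
then `d = 0` iff `Π₀ (Π_t d) = 0` and `⟪n, d⟫ = 0`, where `Π₀ d = d - ⟪d, n⟫ • n`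
and `Π_t d = d - ⟪d, nt⟫ • nt`. -/
theorem vector_zero_iff_tangential_and_normal_zero
    {N : ℕ} (hN : 1 ≤ N) (n nt : EuclideanSpace ℝ (Fin N))
    (hn : ‖n‖ = 1) (hnt : ‖nt‖ = 1) (hne : ⟪nt, n⟫ ≠ 0)
    (d : EuclideanSpace ℝ (Fin N)) :
    d = 0 ↔
      ((d - ⟪d, nt⟫ • nt) - ⟪d - ⟪d, nt⟫ • nt, n⟫ • n = 0 ∧ ⟪n, d⟫ = 0) := by
  constructor
  · rintro rfl
    simp
  · rintro ⟨h1, h2⟩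
    set a : ℝ := ⟪d, nt⟫ with ha
    set c : ℝ := ⟪d - a • nt, n⟫ with hc
    have hd : d = a • nt + c • n := by
      have := sub_eq_zero.mp h1
      linear_combination (norm := module) this
    have hnn : ⟪n, n⟫ = (1 : ℝ) := by
      rw [real_inner_self_eq_norm_sq, hn]; norm_num
    have hntnt : ⟪nt, nt⟫ = (1 : ℝ) := by
      rw [real_inner_self_eq_norm_sq, hnt]; norm_num
    have hsymm : ⟪n, nt⟫ = ⟪nt, n⟫ := real_inner_comm _ _
    have ha' : a = a + c * ⟪n, nt⟫ := by
      conv_lhs => rw [ha, hd]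
      rw [inner_add_left, inner_smul_left, inner_smul_left, hntnt, hsymm, real_inner_comm n nt,
        hsymm]
      simp only [starRingEnd_apply, star_trivial]
      ring
    have hc0 : c = 0 := by
      have : c * ⟪nt, n⟫ = 0 := by
        have := ha'.symm
        rw [hsymm] at this
        linarith
      exact (mul_eq_zero.mp this).resolve_right hne
    have h2' : a * ⟪n, nt⟫ + c = 0 := by
      have : ⟪n, d⟫ = a * ⟪n, nt⟫ + c * ⟪n, n⟫ := by
        rw [hd, inner_add_right, inner_smul_right, inner_smul_right]
      rw [this, hnn] at h2
      linarith
    have ha0 : a = 0 := by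
      have : a * ⟪nt, n⟫ = 0 := by rw [← hsymm]; linarith
      exact (mul_eq_zero.mp this).resolve_right hne
    rw [hd, ha0, hc0]
    simp
end

section
/- Let N ≥ 1, let n and n_t be unit vectors in ℝ^N with ⟨n_t, n⟩ ≠ 0, let d ∈ ℝ^N and let c ∈ ℝ. Then d = c·n_t if and only if both Π₀(Π_t d) = 0 and ⟨n, d − c·n_t⟩ = 0. -/
open scoped RealInnerProductSpace

/-- If `n` and `nt` are unit vectors with `⟪nt, n⟫ ≠ 0`, then for any vector `d`
and scalar `c`, one has `d = c • nt` iff `Π₀ (Π_t d) = 0` and `⟪n, d - c • nt⟫ = 0`,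
where `Π₀ d = d - ⟪d, n⟫ • n` and `Π_t d = d - ⟪d, nt⟫ • nt`. -/
theorem vector_eq_smul_normal_iff_tangential_and_normal
    {N : ℕ} (hN : 1 ≤ N) (n nt : EuclideanSpace ℝ (Fin N))
    (hn : ‖n‖ = 1) (hnt : ‖nt‖ = 1) (hne : ⟪nt, n⟫ ≠ 0)
    (d : EuclideanSpace ℝ (Fin N)) (c : ℝ) :
    d = c • nt ↔
      ((d - ⟪d, nt⟫ • nt) - ⟪d - ⟪d, nt⟫ • nt, n⟫ • n = 0 ∧
        ⟪n, d - c • nt⟫ = 0) := by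
  have hnt2 : ⟪nt, nt⟫ = (1:ℝ) := by
    rw [real_inner_self_eq_norm_sq, hnt]; norm_num
  constructor
  · rintro rfl
    have h1 : (c • nt : EuclideanSpace ℝ (Fin N)) - ⟪c • nt, nt⟫ • nt = 0 := by
      rw [real_inner_smul_left, hnt2]; simp
    refine ⟨by rw [h1]; simp, by simp⟩
  · rintro ⟨h1, h2⟩
    set v : EuclideanSpace ℝ (Fin N) := d - ⟪d, nt⟫ • nt with hv
    have hvnt : ⟪v, nt⟫ = 0 := by
      rw [hv, inner_sub_left, real_inner_smul_left, hnt2]; ring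
    have hveq : v = ⟪v, n⟫ • n := by
      exact sub_eq_zero.mp h1
    have hvn : ⟪v, n⟫ = 0 := by
      have : ⟪v, nt⟫ = ⟪v, n⟫ * ⟪n, nt⟫ := by
        conv_lhs => rw [hveq]
        rw [real_inner_smul_left]
      rw [hvnt] at this
      have hnn : ⟪n, nt⟫ ≠ 0 := by rwa [real_inner_comm] at hne
      exact (mul_eq_zero.mp this.symm).resolve_right hnn
    have hv0 : v = 0 := by rw [hveq, hvn, zero_smul]
    have hd : d = ⟪d, nt⟫ • nt := by
      have := sub_eq_zero.mp hv0; exact this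
    have hc : ⟪d, nt⟫ = c := by
      have : ⟪n, d - c • nt⟫ = (⟪d, nt⟫ - c) * ⟪n, nt⟫ := by
        rw [inner_sub_right, inner_smul_right]
        nth_rewrite 1 [hd]
        rw [inner_smul_right]; ring
      rw [h2] at this
      have hnn : ⟪n, nt⟫ ≠ 0 := by rwa [real_inner_comm] at hne
      have := (mul_eq_zero.mp this.symm).resolve_right hnn
      linarith
    rw [hd, hc]
end
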